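/- arXiv:1509.03529 — 3 statements merged into one kernel-verified Lean document; each statement's English description precedes it below -/
import Mathlib

section
/- Let f be a càdlàg function on [0,∞) with values in a metric space (E,ρ), and let 0 ≤ τ₀ ≤ σ₀ < τ₁ < σ₁ < τ₂ < ... be real numbers with τₙ → ∞ and the Lebesgue measure of ⋃ₖ[σₖ, τₖ₊₁) infinite. Define L(t) = ∫₀ᵗ 1_{⋃ₖ[σₖ,τₖ₊₁)}(s) ds, A = L⁻¹ (the right-continuous generalized inverse), and f^{τ,σ}(t) = f(A(t)). If (T+1) − L(T+1) ≤ δ ≤ 1, then sup_{t∈[0,T]} ρ(f(t), f^{τ,σ}(t)) ≤ ω_f^{T+1}(δ), where ω_f^{T+1}(δ) = sup{ρ(f(s),f(t)) : s,t ∈ [0,T+1], |s−t| ≤ δ} is the modulus of continuity of f on [0,T+1]. -/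
/-!
Deleting time only delays the clock: `A t` is the first time at which `L` reaches `t`, and since
`s - L s` (the time deleted up to `s`) is nondecreasing and at most `δ` at `T + 1`, this happens
between `t` and `t + δ`. Hence `f t` and `f^{τ,σ} t = f (A t)` are values of `f` at two points of
`[0, T + 1]` at distance at most `δ`; the supremum defining the modulus is finite because a càdlàg
path is bounded on compact intervals.
-/

open MeasureTheory Filter Set Bornology Topology

section Cadlag

variable {E : Type*} [MetricSpace E] {f : ℝ → E}

lemma exists_isBounded_preimage_mem_nhdsWithin_Ici
    (hf_right : ∀ t : ℝ, 0 ≤ t → ContinuousWithinAt f (Ici t) t)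
    (hf_left : ∀ t : ℝ, 0 < t → ∃ l : E, Tendsto f (𝓝[<] t) (𝓝 l))
    {x : ℝ} (hx : 0 ≤ x) : ∃ B : Set E, IsBounded B ∧ f ⁻¹' B ∈ 𝓝[Ici 0] x := by
  have h_right : f ⁻¹' Metric.ball (f x) 1 ∈ 𝓝[≥] x :=
    hf_right x hx (Metric.ball_mem_nhds _ one_pos)
  rcases hx.eq_or_lt with rfl | hx
  · exact ⟨_, Metric.isBounded_ball, h_right⟩
  obtain ⟨l, hl⟩ := hf_left x hx
  have h_left : f ⁻¹' Metric.ball l 1 ∈ 𝓝[<] x := hl (Metric.ball_mem_nhds _ one_pos)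
  refine ⟨Metric.ball l 1 ∪ Metric.ball (f x) 1,
    Metric.isBounded_ball.union Metric.isBounded_ball, nhdsWithin_le_nhds ?_⟩
  rw [← nhdsLT_sup_nhdsGE, mem_sup, preimage_union]
  exact ⟨mem_of_superset h_left subset_union_left, mem_of_superset h_right subset_union_right⟩

lemma isBounded_image_Icc_of_cadlag
    (hf_right : ∀ t : ℝ, 0 ≤ t → ContinuousWithinAt f (Ici t) t)
    (hf_left : ∀ t : ℝ, 0 < t → ∃ l : E, Tendsto f (𝓝[<] t) (𝓝 l))
    (b : ℝ) : IsBounded (f '' Icc 0 b) := by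
  refine isCompact_Icc.induction_on (p := fun s => IsBounded (f '' s)) (by simp)
    (fun s t hst ht => ht.subset (image_mono hst))
    (fun s t hs ht => by simpa only [image_union] using hs.union ht) fun x hx => ?_
  obtain ⟨B, hB, hfB⟩ := exists_isBounded_preimage_mem_nhdsWithin_Ici hf_right hf_left hx.1
  exact ⟨f ⁻¹' B, nhdsWithin_mono x Icc_subset_Ici_self hfB, hB.subset (image_preimage_subset f B)⟩

end Cadlag

noncomputable def modulusOfContinuity {E : Type*} [MetricSpace E] (f : ℝ → E) (K : Set ℝ)
    (δ : ℝ) : ℝ :=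
  sSup {d : ℝ | ∃ u v : ℝ, u ∈ K ∧ v ∈ K ∧ |u - v| ≤ δ ∧ d = dist (f u) (f v)}

lemma dist_le_modulusOfContinuity {E : Type*} [MetricSpace E] {f : ℝ → E} {K : Set ℝ}
    (hK : IsBounded (f '' K)) {δ u v : ℝ} (hu : u ∈ K) (hv : v ∈ K) (huv : |u - v| ≤ δ) :
    dist (f u) (f v) ≤ modulusOfContinuity f K δ := by
  refine le_csSup ⟨Metric.diam (f '' K), ?_⟩ ⟨u, v, hu, hv, huv, rfl⟩
  rintro _ ⟨u', v', hu', hv', -, rfl⟩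
  exact Metric.dist_le_diam_of_mem hK (mem_image_of_mem f hu') (mem_image_of_mem f hv')

lemma monotone_sub_intervalIntegral_indicator_one {U : Set ℝ} (hU : MeasurableSet U) :
    Monotone fun t => t - ∫ s in (0 : ℝ)..t, U.indicator (fun _ => (1 : ℝ)) s := by
  have hint : ∀ a b : ℝ, IntervalIntegrable (U.indicator fun _ => (1 : ℝ)) volume a b :=
    fun a b => (intervalIntegrable_iff.2 <|
      (integrableOn_const measure_Ioc_lt_top.ne).indicator hU)
  intro a b hab
  have h_le : ∫ s in a..b, U.indicator (fun _ => (1 : ℝ)) s ≤ b - a := by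
    calc ∫ s in a..b, U.indicator (fun _ => (1 : ℝ)) s ≤ ∫ _ in a..b, (1 : ℝ) :=
          intervalIntegral.integral_mono_on hab (hint a b) intervalIntegrable_const
            fun s _ => indicator_apply_le' (fun _ => le_rfl) fun _ => zero_le_one
      _ = b - a := by simp
  have h_split := intervalIntegral.integral_interval_sub_left (hint 0 b) (hint 0 a)
  dsimp only
  linarith

lemma sInf_setOf_le_apply_mem_Icc_add {L : ℝ → ℝ} (hL0 : L 0 = 0)
    (hmono : Monotone fun s => s - L s) {t δ b : ℝ} (ht : 0 ≤ t) (hδ : 0 ≤ δ)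
    (htb : t + δ ≤ b) (hb : b - L b ≤ δ) :
    sInf {s : ℝ | 0 ≤ s ∧ t ≤ L s} ∈ Icc t (t + δ) := by
  have h_mem : t + δ ∈ {s : ℝ | 0 ≤ s ∧ t ≤ L s} := by
    have := hmono htb
    dsimp only at this
    exact ⟨by linarith, by linarith⟩
  refine ⟨le_csInf ⟨_, h_mem⟩ fun s hs => ?_, csInf_le ⟨0, fun s hs => hs.1⟩ h_mem⟩
  have := hmono hs.1
  simp only [hL0] at this
  linarith [hs.2]

theorem deleted_time_close_to_original_general
    {E : Type*} [MetricSpace E] (f : ℝ → E)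
    (hf_right : ∀ t : ℝ, 0 ≤ t → ContinuousWithinAt f (Set.Ici t) t)
    (hf_left : ∀ t : ℝ, 0 < t → ∃ l : E, Tendsto f (nhdsWithin t (Set.Iio t)) (nhds l))
    (τ σ : ℕ → ℝ)
    (L : ℝ → ℝ)
    (hL : ∀ t, L t = ∫ s in (0:ℝ)..t,
      Set.indicator (⋃ k, Set.Ico (σ k) (τ (k + 1))) (fun _ => (1:ℝ)) s)
    (A : ℝ → ℝ)
    (hA : ∀ t, A t = sInf {s : ℝ | 0 ≤ s ∧ t ≤ L s})
    (T δ : ℝ) (hδ0 : 0 ≤ δ) (hδ1 : δ ≤ 1)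
    (hdel : (T + 1) - L (T + 1) ≤ δ) :
    ∀ t ∈ Set.Icc (0:ℝ) T,
      dist (f t) (f (A t)) ≤
        sSup {d : ℝ | ∃ u v : ℝ, u ∈ Set.Icc (0:ℝ) (T + 1) ∧ v ∈ Set.Icc (0:ℝ) (T + 1) ∧
          |u - v| ≤ δ ∧ d = dist (f u) (f v)} := by
  rintro t ⟨ht0, htT⟩
  have hL_eq : L = _ := funext hL
  have hmono : Monotone fun s => s - L s := hL_eq ▸
    monotone_sub_intervalIntegral_indicator_one (MeasurableSet.iUnion fun _ => measurableSet_Ico)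
  obtain ⟨hAt_ge, hAt_le⟩ : A t ∈ Icc t (t + δ) := hA t ▸
    sInf_setOf_le_apply_mem_Icc_add (by simp [hL_eq]) hmono ht0 hδ0 (by linarith) hdel
  exact dist_le_modulusOfContinuity (isBounded_image_Icc_of_cadlag hf_right hf_left (T + 1))
    ⟨ht0, by linarith⟩ ⟨by linarith, by linarith⟩ (abs_le.2 ⟨by linarith, by linarith⟩)

/-- If the total deleted time up to `T+1` is at most `δ ≤ 1`, then the path obtained from a
càdlàg path `f` by deleting the time intervals `⋃ k, [τ k, σ k)` is uniformly within the
modulus of continuity `ω_f^{T+1}(δ)` of the original path on `[0,T]`. -/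
theorem deleted_time_close_to_original
    {E : Type*} [MetricSpace E] (f : ℝ → E)
    (hf_right : ∀ t : ℝ, 0 ≤ t → ContinuousWithinAt f (Set.Ici t) t)
    (hf_left : ∀ t : ℝ, 0 < t → ∃ l : E, Tendsto f (nhdsWithin t (Set.Iio t)) (nhds l))
    (τ σ : ℕ → ℝ)
    (h0 : 0 ≤ τ 0) (h1 : τ 0 ≤ σ 0)
    (h2 : ∀ k, σ k < τ (k + 1))
    (h3 : ∀ k, 1 ≤ k → τ k < σ k)
    (h4 : Tendsto τ atTop atTop)
    (h5 : volume (⋃ k, Set.Ico (σ k) (τ (k + 1))) = ⊤)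
    (L : ℝ → ℝ)
    (hL : ∀ t, L t = ∫ s in (0:ℝ)..t,
      Set.indicator (⋃ k, Set.Ico (σ k) (τ (k + 1))) (fun _ => (1:ℝ)) s)
    (A : ℝ → ℝ)
    (hA : ∀ t, A t = sInf {s : ℝ | 0 ≤ s ∧ t ≤ L s})
    (T δ : ℝ) (hT : 0 ≤ T) (hδ0 : 0 ≤ δ) (hδ1 : δ ≤ 1)
    (hdel : (T + 1) - L (T + 1) ≤ δ) :
    ∀ t ∈ Set.Icc (0:ℝ) T,
      dist (f t) (f (A t)) ≤
        sSup {d : ℝ | ∃ u v : ℝ, u ∈ Set.Icc (0:ℝ) (T + 1) ∧ v ∈ Set.Icc (0:ℝ) (T + 1) ∧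
          |u - v| ≤ δ ∧ d = dist (f u) (f v)} :=
  deleted_time_close_to_original_general f hf_right hf_left τ σ L hL A hA T δ hδ0 hδ1 hdel
end

section
/- Let M = { t̄ = (t₁, t₂, ...) ∈ (0,∞)^ℕ : Σᵢ tᵢ = +∞ } with the metric ρ_M(t̄, s̄) = Σₙ 2^{−n} (|tₙ − sₙ| ∧ 1), and let C_E([0,∞))^ℕ carry the product topology of uniform-on-compacts convergence. Then the concatenation map F : C_E([0,∞))^ℕ × M → D_E([0,∞)) defined by F(f̄, t̄)(s) = f_k(s − Σ_{i<k} tᵢ) for s ∈ [Σ_{i<k} tᵢ, Σ_{i≤k} tᵢ) is continuous (with D_E([0,∞)) carrying the Skorokhod topology). -/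
open MeasureTheory Filter Set
open scoped Classical

/-- Partial sums `T k = t₁ + ⋯ + t_k` (0-indexed: `∑_{i<k} t i`). -/
noncomputable def partialSum (t : ℕ → ℝ) (k : ℕ) : ℝ :=
  ∑ i ∈ Finset.range k, t i

/-- The concatenation map `F(f̄, t̄)`: use the path `f k` (restarted) on the time interval
`[∑_{i<k} t i, ∑_{i≤k} t i)`. -/
noncomputable def concatPaths {E : Type*} (f : ℕ → ℝ → E) (t : ℕ → ℝ) (s : ℝ) : E :=
  if h : ∃ k, partialSum t k ≤ s ∧ s < partialSum t (k + 1) then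
    f h.choose (s - partialSum t h.choose)
  else f 0 s

/-- Convergence in the Skorokhod topology on `D_E([0,∞))`: there exist time changes
(strictly increasing bijections of `[0,∞)` fixing `0`) that are uniformly close to the
identity on compacts and transform the approximating paths uniformly close to the limit
path on compacts. -/
def SkorokhodTendsto {E : Type*} [MetricSpace E] (g : ℕ → ℝ → E) (g₀ : ℝ → E) : Prop :=
  ∃ l : ℕ → ℝ → ℝ,
    (∀ n, StrictMono (l n)) ∧ (∀ n, Function.Surjective (l n)) ∧ (∀ n, l n 0 = 0) ∧
    ∀ T > (0:ℝ), ∀ ε > (0:ℝ), ∀ᶠ n in atTop,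
      ∀ s ∈ Set.Icc (0:ℝ) T, |l n s - s| < ε ∧ dist (g n (l n s)) (g₀ s) < ε

section Aux

variable {a b : ℕ → ℝ}

lemma partialSum_zero (t : ℕ → ℝ) : partialSum t 0 = 0 := by simp [partialSum]

lemma partialSum_succ (t : ℕ → ℝ) (k : ℕ) :
    partialSum t (k + 1) = partialSum t k + t k := Finset.sum_range_succ _ _

lemma partialSum_strictMono (hpos : ∀ k, 0 < a k) : StrictMono (partialSum a) := by
  apply strictMono_nat_of_lt_succ
  intro n
  rw [partialSum_succ]
  linarith [hpos n]

lemma partialSum_nonneg (hpos : ∀ k, 0 < a k) (k : ℕ) : 0 ≤ partialSum a k :=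
  Finset.sum_nonneg fun i _ => (hpos i).le

lemma exists_idx (hpos : ∀ k, 0 < a k) (hdiv : Tendsto (partialSum a) atTop atTop)
    {s : ℝ} (hs : 0 ≤ s) : ∃ k, partialSum a k ≤ s ∧ s < partialSum a (k + 1) := by
  have hP : ∃ m, s < partialSum a m := ((hdiv.eventually (eventually_gt_atTop s)).exists)
  have hspec : s < partialSum a (Nat.find hP) := Nat.find_spec hP
  have hne : Nat.find hP ≠ 0 := by
    intro h
    rw [h, partialSum_zero] at hspec
    linarith
  obtain ⟨k, hkeq⟩ := Nat.exists_eq_succ_of_ne_zero hne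
  refine ⟨k, ?_, ?_⟩
  · have := Nat.find_min hP (m := k) (by omega)
    linarith [not_lt.mp this]
  · rw [show k + 1 = Nat.succ k from rfl, ← hkeq]
    exact hspec

lemma idx_unique (hpos : ∀ k, 0 < a k) {k j : ℕ} {s : ℝ}
    (hk : partialSum a k ≤ s ∧ s < partialSum a (k + 1))
    (hj : partialSum a j ≤ s ∧ s < partialSum a (j + 1)) : k = j := by
  have hmono := partialSum_strictMono hpos
  by_contra hne
  rcases Nat.lt_or_ge k j with h | h
  · have : partialSum a (k + 1) ≤ partialSum a j := hmono.monotone h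
    linarith [hk.2, hj.1]
  · rcases Nat.lt_or_ge j k with h' | h'
    · have : partialSum a (j + 1) ≤ partialSum a k := hmono.monotone h'
      linarith [hj.2, hk.1]
    · exact hne (le_antisymm h' h)

lemma concatPaths_eq {E : Type*} (f : ℕ → ℝ → E) (hpos : ∀ k, 0 < a k) {k : ℕ} {s : ℝ}
    (hk : partialSum a k ≤ s ∧ s < partialSum a (k + 1)) :
    concatPaths f a s = f k (s - partialSum a k) := by
  have h : ∃ k, partialSum a k ≤ s ∧ s < partialSum a (k + 1) := ⟨k, hk⟩
  rw [concatPaths, dif_pos h]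
  rw [idx_unique hpos h.choose_spec hk]

/-- Piecewise linear time change mapping the partition given by `a` onto the one given by `b`. -/
noncomputable def timeChange (a b : ℕ → ℝ) (s : ℝ) : ℝ :=
  if h : ∃ k, partialSum a k ≤ s ∧ s < partialSum a (k + 1) then
    partialSum b h.choose + (s - partialSum a h.choose) * (b h.choose / a h.choose)
  else s

lemma timeChange_eq (b : ℕ → ℝ) (hpos : ∀ k, 0 < a k) {k : ℕ} {s : ℝ}
    (hk : partialSum a k ≤ s ∧ s < partialSum a (k + 1)) :
    timeChange a b s = partialSum b k + (s - partialSum a k) * (b k / a k) := by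
  have h : ∃ k, partialSum a k ≤ s ∧ s < partialSum a (k + 1) := ⟨k, hk⟩
  rw [timeChange, dif_pos h]
  rw [idx_unique hpos h.choose_spec hk]

lemma timeChange_neg (b : ℕ → ℝ) (hpos : ∀ k, 0 < a k) {s : ℝ} (hs : s < 0) :
    timeChange a b s = s := by
  rw [timeChange, dif_neg]
  rintro ⟨k, hk1, -⟩
  linarith [partialSum_nonneg hpos k]

lemma timeChange_mem (hpos : ∀ k, 0 < a k) (hposb : ∀ k, 0 < b k) {k : ℕ} {s : ℝ}
    (hk : partialSum a k ≤ s ∧ s < partialSum a (k + 1)) :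
    partialSum b k ≤ timeChange a b s ∧ timeChange a b s < partialSum b (k + 1) := by
  rw [timeChange_eq b hpos hk, partialSum_succ]
  have h1 : 0 ≤ s - partialSum a k := by linarith [hk.1]
  have h2 : s - partialSum a k < a k := by
    have := hk.2; rw [partialSum_succ] at this; linarith
  have hr : 0 < b k / a k := div_pos (hposb k) (hpos k)
  constructor
  · nlinarith
  · have : (s - partialSum a k) * (b k / a k) < a k * (b k / a k) :=
      mul_lt_mul_of_pos_right h2 hr
    have heq : a k * (b k / a k) = b k := by
      rw [mul_comm, div_mul_cancel₀ _ (hpos k).ne']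
    nlinarith

lemma timeChange_zero (b : ℕ → ℝ) (hpos : ∀ k, 0 < a k) : timeChange a b 0 = 0 := by
  have hk : partialSum a 0 ≤ 0 ∧ (0:ℝ) < partialSum a (0 + 1) := by
    constructor
    · rw [partialSum_zero]
    · rw [partialSum_succ, partialSum_zero]; simpa using hpos 0
  rw [timeChange_eq b hpos hk, partialSum_zero, partialSum_zero]
  ring

lemma timeChange_strictMono (hpos : ∀ k, 0 < a k) (hposb : ∀ k, 0 < b k)
    (hdiv : Tendsto (partialSum a) atTop atTop) : StrictMono (timeChange a b) := by
  intro s s' hss'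
  rcases lt_or_ge s 0 with hs | hs
  · rw [timeChange_neg b hpos hs]
    rcases lt_or_ge s' 0 with hs' | hs'
    · rw [timeChange_neg b hpos hs']; exact hss'
    · obtain ⟨k', hk'⟩ := exists_idx hpos hdiv hs'
      have := (timeChange_mem hpos hposb hk').1
      have := partialSum_nonneg hposb k'
      linarith
  · have hs' : 0 ≤ s' := le_of_lt (lt_of_le_of_lt hs hss')
    obtain ⟨k, hk⟩ := exists_idx hpos hdiv hs
    obtain ⟨k', hk'⟩ := exists_idx hpos hdiv hs'
    have hkk' : k ≤ k' := by
      by_contra h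
      push_neg at h
      have : partialSum a (k' + 1) ≤ partialSum a k :=
        (partialSum_strictMono hpos).monotone h
      linarith [hk.1, hk'.2]
    rcases eq_or_lt_of_le hkk' with rfl | hlt
    · rw [timeChange_eq b hpos hk, timeChange_eq b hpos hk']
      have hr : 0 < b k / a k := div_pos (hposb k) (hpos k)
      nlinarith
    · have h1 := (timeChange_mem hpos hposb hk).2
      have h2 := (timeChange_mem hpos hposb hk').1
      have h3 : partialSum b (k + 1) ≤ partialSum b k' :=
        (partialSum_strictMono hposb).monotone hlt
      linarith

lemma timeChange_comp (hpos : ∀ k, 0 < a k) (hposb : ∀ k, 0 < b k)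
    (hdivb : Tendsto (partialSum b) atTop atTop) {y : ℝ} (hy : 0 ≤ y) :
    timeChange a b (timeChange b a y) = y := by
  obtain ⟨k, hk⟩ := exists_idx hposb hdivb hy
  have hx := timeChange_mem hposb hpos hk
  rw [timeChange_eq a hposb hk] at hx ⊢
  rw [timeChange_eq b hpos hx]
  have ha : a k ≠ 0 := (hpos k).ne'
  have hb : b k ≠ 0 := (hposb k).ne'
  field_simp
  ring

lemma timeChange_surjective (hpos : ∀ k, 0 < a k) (hposb : ∀ k, 0 < b k)
    (hdivb : Tendsto (partialSum b) atTop atTop) :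
    Function.Surjective (timeChange a b) := by
  intro y
  rcases le_or_gt 0 y with hy | hy
  · exact ⟨timeChange b a y, timeChange_comp hpos hposb hdivb hy⟩
  · exact ⟨y, timeChange_neg b hpos hy⟩

end Aux

/-- Continuity of the concatenation map `F : C_E([0,∞))^ℕ × M → D_E([0,∞))`:
if every coordinate path converges uniformly on compacts and every duration converges,
the concatenated paths converge in the Skorokhod sense. -/
theorem concatPaths_continuous
    {E : Type*} [MetricSpace E] [LocallyCompactSpace E]
    (f : ℕ → ℕ → ℝ → E) (f₀ : ℕ → ℝ → E) (t : ℕ → ℕ → ℝ) (t₀ : ℕ → ℝ)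
    (hcont : ∀ n k, Continuous (f n k)) (hcont₀ : ∀ k, Continuous (f₀ k))
    (hpos : ∀ n k, 0 < t n k) (hpos₀ : ∀ k, 0 < t₀ k)
    (hdiv : ∀ n, Tendsto (partialSum (t n)) atTop atTop)
    (hdiv₀ : Tendsto (partialSum t₀) atTop atTop)
    (hconv_t : ∀ k, Tendsto (fun n => t n k) atTop (nhds (t₀ k)))
    (hconv_f : ∀ k, TendstoLocallyUniformly (fun n => f n k) (f₀ k) atTop) :
    SkorokhodTendsto (fun n => concatPaths (f n) (t n)) (concatPaths f₀ t₀) := by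
  refine ⟨fun n => timeChange t₀ (t n),
    fun n => timeChange_strictMono hpos₀ (hpos n) hdiv₀,
    fun n => timeChange_surjective hpos₀ (hpos n) (hdiv n),
    fun n => timeChange_zero (t n) hpos₀, ?_⟩
  intro T hT ε hε
  -- choose cutoff K
  obtain ⟨K, hK⟩ := (hdiv₀.eventually (eventually_gt_atTop T)).exists
  set C : ℝ := 2 * (T + 1) with hC
  have hCpos : 0 < C := by positivity
  -- uniform continuity moduli for f₀ k on [-C, C]
  have hUC : ∀ k, ∃ δ > 0, ∀ x ∈ Icc (-C) C, ∀ y ∈ Icc (-C) C,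
      dist x y < δ → dist (f₀ k x) (f₀ k y) < ε / 2 := by
    intro k
    have huc : UniformContinuousOn (f₀ k) (Icc (-C) C) :=
      isCompact_Icc.uniformContinuousOn_of_continuous (hcont₀ k).continuousOn
    exact Metric.uniformContinuousOn_iff.mp huc (ε / 2) (half_pos hε)
  choose δ₀ hδ₀pos hδ₀ using hUC
  -- per-coordinate eventual estimates
  have hEk : ∀ k, ∀ᶠ n in atTop,
      |partialSum (t n) k - partialSum t₀ k| < ε / 2 ∧
      |t n k / t₀ k - 1| < min 1 (min (ε / (2 * (T + 1))) (δ₀ k / (T + 1))) ∧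
      ∀ u ∈ Icc (-C) C, dist (f₀ k u) (f n k u) < ε / 2 := by
    intro k
    have h1 : Tendsto (fun n => partialSum (t n) k) atTop (nhds (partialSum t₀ k)) := by
      unfold partialSum
      exact tendsto_finset_sum _ fun i _ => hconv_t i
    have h1' : ∀ᶠ n in atTop, |partialSum (t n) k - partialSum t₀ k| < ε / 2 := by
      have := Metric.tendsto_nhds.mp h1 (ε / 2) (half_pos hε)
      simpa [Real.dist_eq] using this
    have h2 : Tendsto (fun n => t n k / t₀ k) atTop (nhds 1) := by
      have := (hconv_t k).div_const (t₀ k)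
      rwa [div_self (hpos₀ k).ne'] at this
    have hδ : 0 < min 1 (min (ε / (2 * (T + 1))) (δ₀ k / (T + 1))) := by
      have := hδ₀pos k
      positivity
    have h2' : ∀ᶠ n in atTop,
        |t n k / t₀ k - 1| < min 1 (min (ε / (2 * (T + 1))) (δ₀ k / (T + 1))) := by
      have := Metric.tendsto_nhds.mp h2 _ hδ
      simpa [Real.dist_eq] using this
    have h3 : TendstoUniformlyOn (fun n => f n k) (f₀ k) atTop (Icc (-C) C) :=
      (tendstoLocallyUniformlyOn_iff_tendstoUniformlyOn_of_compact isCompact_Icc).mp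
        ((tendstoLocallyUniformlyOn_univ.mpr (hconv_f k)).mono (Set.subset_univ _))
    have h3' := Metric.tendstoUniformlyOn_iff.mp h3 (ε / 2) (half_pos hε)
    filter_upwards [h1', h2', h3'] with n a1 a2 a3
    exact ⟨a1, a2, a3⟩
  have hE : ∀ᶠ n in atTop, ∀ k ∈ Finset.range K,
      |partialSum (t n) k - partialSum t₀ k| < ε / 2 ∧
      |t n k / t₀ k - 1| < min 1 (min (ε / (2 * (T + 1))) (δ₀ k / (T + 1))) ∧
      ∀ u ∈ Icc (-C) C, dist (f₀ k u) (f n k u) < ε / 2 :=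
    (eventually_all_finset _).mpr fun k _ => hEk k
  filter_upwards [hE] with n hn
  intro s hs
  obtain ⟨k, hk⟩ := exists_idx hpos₀ hdiv₀ hs.1
  have hkK : k < K := by
    have h1 : partialSum t₀ k ≤ T := le_trans hk.1 hs.2
    exact (partialSum_strictMono hpos₀).lt_iff_lt.mp (lt_of_le_of_lt h1 hK)
  obtain ⟨h1, h2, h3⟩ := hn k (Finset.mem_range.mpr hkK)
  set u : ℝ := s - partialSum t₀ k with hu
  set r : ℝ := t n k / t₀ k with hrdef
  clear_value u r
  have hu0 : 0 ≤ u := by simp only [hu]; linarith [hk.1]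
  have huT : u ≤ T := by
    have := partialSum_nonneg hpos₀ k
    simp only [hu]; linarith [hs.2]
  have hr0 : 0 < r := by rw [hrdef]; exact div_pos (hpos n k) (hpos₀ k)
  have hr2 : r < 2 := by
    have := lt_of_lt_of_le h2 (min_le_left _ _)
    have := abs_lt.mp this
    linarith [this.2]
  have hval : timeChange t₀ (t n) s = partialSum (t n) k + u * r := by
    rw [hu, hrdef]; exact timeChange_eq (t n) hpos₀ hk
  have hrε : |r - 1| < ε / (2 * (T + 1)) :=
    lt_of_lt_of_le h2 (le_trans (min_le_right _ _) (min_le_left _ _))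
  have hrδ : |r - 1| < δ₀ k / (T + 1) :=
    lt_of_lt_of_le h2 (le_trans (min_le_right _ _) (min_le_right _ _))
  constructor
  · -- |l n s - s| < ε
    rw [hval]
    have hub : u * |r - 1| ≤ T * (ε / (2 * (T + 1))) := by
      apply mul_le_mul huT hrε.le (abs_nonneg _) hT.le
    have habs : |partialSum (t n) k + u * r - s| ≤
        |partialSum (t n) k - partialSum t₀ k| + u * |r - 1| := by
      have : partialSum (t n) k + u * r - s =
          (partialSum (t n) k - partialSum t₀ k) + u * (r - 1) := by
        simp only [hu]; ring
      rw [this]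
      calc |(partialSum (t n) k - partialSum t₀ k) + u * (r - 1)|
          ≤ |partialSum (t n) k - partialSum t₀ k| + |u * (r - 1)| := abs_add_le _ _
        _ = |partialSum (t n) k - partialSum t₀ k| + u * |r - 1| := by
            rw [abs_mul, abs_of_nonneg hu0]
    have hfrac : T * (ε / (2 * (T + 1))) < ε / 2 := by
      rw [← mul_div_assoc, div_lt_div_iff₀ (by positivity) (by norm_num : (0:ℝ) < 2)]
      nlinarith
    linarith
  · -- distance of paths
    have hmem := timeChange_mem hpos₀ (hpos n) hk
    have hc₀ : concatPaths f₀ t₀ s = f₀ k u := by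
      rw [hu]; exact concatPaths_eq f₀ hpos₀ hk
    have hcn : concatPaths (f n) (t n) (timeChange t₀ (t n) s) = f n k (u * r) := by
      rw [concatPaths_eq (f n) (hpos n) hmem, hval]
      ring_nf
    simp only [hcn, hc₀]
    have hurC : u * r ∈ Icc (-C) C := by
      constructor
      · nlinarith
      · have : u * r ≤ T * 2 := by nlinarith
        simp only [hC]; linarith
    have huC : u ∈ Icc (-C) C := by
      constructor
      · linarith
      · simp only [hC]; linarith
    have hd1 : dist (f n k (u * r)) (f₀ k (u * r)) < ε / 2 := by
      rw [dist_comm]; exact h3 _ hurC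
    have hd2 : dist (f₀ k (u * r)) (f₀ k u) < ε / 2 := by
      apply hδ₀ k _ hurC _ huC
      rw [Real.dist_eq]
      have : |u * r - u| = u * |r - 1| := by
        rw [show u * r - u = u * (r - 1) by ring, abs_mul, abs_of_nonneg hu0]
      rw [this]
      calc u * |r - 1| ≤ T * (δ₀ k / (T + 1)) :=
            mul_le_mul huT hrδ.le (abs_nonneg _) hT.le
        _ < δ₀ k := by
            rw [div_eq_mul_inv]
            have hδk := hδ₀pos k
            rw [show T * (δ₀ k * (T + 1)⁻¹) = δ₀ k * (T * (T + 1)⁻¹) by ring]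
            have : T * (T + 1)⁻¹ < 1 := by
              rw [mul_inv_lt_iff₀ (by linarith)]
              linarith
            nlinarith
    calc dist (f n k (u * r)) (f₀ k u)
        ≤ dist (f n k (u * r)) (f₀ k (u * r)) + dist (f₀ k (u * r)) (f₀ k u) :=
          dist_triangle _ _ _
      _ < ε := by linarith
end

section
/- Consider two ±1-increment paths on ℤ built from a common driving: let X̃ follow ±1 steps except that upon its i-th visit to 0 it jumps to a value of absolute value ≥ 1 (the jump ξ_i with |ξ_i| ≥ 1), and let S̃ be the path with the same ±1 increments but which jumps to sign(ξ_i)·1 on its i-th visit to 0 (matching the sign of X̃'s jump). Then the successive return times to 0 satisfy t̃_{i+1} − t̃_i ≤ t_{i+1} − t_i for all i (where t_i, t̃_i are the i-th visit times of 0 by X̃, S̃ respectively), and consequently the visit counts satisfy r_{X̃}(k) ≤ r_{S̃}(k) for every k ≥ 0. -/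
section Aux
variable {p : ℕ → Prop} [DecidablePred p]

lemma count_between (hp : (setOf p).Infinite) {i k : ℕ}
    (h1 : Nat.nth p i ≤ k) (h2 : k < Nat.nth p (i + 1)) :
    Nat.count p (k + 1) = i + 1 := by
  have h3 : i + 1 ≤ Nat.count p (k + 1) := by
    calc i + 1 = Nat.count p (Nat.nth p i + 1) := (Nat.count_nth_succ_of_infinite hp i).symm
      _ ≤ _ := Nat.count_monotone p (by omega)
  have h4 : Nat.count p (k + 1) ≤ i + 1 := by
    calc Nat.count p (k + 1) ≤ Nat.count p (Nat.nth p (i + 1)) :=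
          Nat.count_monotone p (by omega)
      _ = i + 1 := Nat.count_nth_of_infinite hp _
  omega

lemma not_p_between (hp : (setOf p).Infinite) {i k : ℕ}
    (h1 : Nat.nth p i < k) (h2 : k < Nat.nth p (i + 1)) : ¬ p k := by
  intro hk
  have h3 : Nat.count p (k + 1) = i + 1 := count_between hp (by omega) h2
  have hk1 : k = (k - 1) + 1 := by omega
  have h4 : Nat.count p ((k - 1) + 1) = i + 1 := count_between hp (by omega) (by omega)
  rw [← hk1] at h4
  rw [Nat.count_succ, if_pos hk] at h3
  omega

lemma nth_succ_le_of_p (hp : (setOf p).Infinite) {i k : ℕ}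
    (hk : p k) (h : Nat.nth p i < k) : Nat.nth p (i + 1) ≤ k := by
  have h1 : i < Nat.count p k := (Nat.lt_nth_iff_count_lt hp).mpr h
  calc Nat.nth p (i + 1) ≤ Nat.nth p (Nat.count p k) := Nat.nth_monotone hp (by omega)
    _ = k := Nat.nth_count hk

end Aux

lemma ivt_pos (f : ℕ → ℤ) (hstep : ∀ m, (f (m + 1) - f m).natAbs = 1)
    (n : ℕ) (h0 : 0 < f 0) (hn : f n ≤ 0) : ∃ m ≤ n, f m = 0 := by
  classical
  have hex : ∃ m, f m ≤ 0 := ⟨n, hn⟩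
  set m := Nat.find hex with hmdef
  have hfm : f m ≤ 0 := Nat.find_spec hex
  have hmn : m ≤ n := Nat.find_min' hex hn
  refine ⟨m, hmn, ?_⟩
  have hm0 : m ≠ 0 := by
    intro h
    rw [h] at hfm; omega
  have hprev : ¬ f (m - 1) ≤ 0 := Nat.find_min hex (by omega)
  have hs := hstep (m - 1)
  have hm1 : m - 1 + 1 = m := by omega
  rw [hm1] at hs
  omega

lemma ivt_neg (f : ℕ → ℤ) (hstep : ∀ m, (f (m + 1) - f m).natAbs = 1)
    (n : ℕ) (h0 : f 0 < 0) (hn : 0 ≤ f n) : ∃ m ≤ n, f m = 0 := by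
  have hstep' : ∀ m, ((fun m => -f m) (m + 1) - (fun m => -f m) m).natAbs = 1 := by
    intro m
    have := hstep m
    simp only []
    omega
  obtain ⟨m, hm, hfm⟩ := ivt_pos (fun m => -f m) hstep' n
    (show (0:ℤ) < -f 0 by omega) (show -f n ≤ 0 by omega)
  exact ⟨m, hm, by omega⟩

lemma excursion (e : ℕ → ℕ → ℤ) (J : ℕ → ℤ) (Y : ℕ → ℤ) (a c : ℕ → ℕ)
    (hc : ∀ k, c k = Nat.count (fun k => Y k = 0) (k + 1))
    (ha : ∀ k, a (k + 1) = if Y k = 0 then 0 else a k + 1)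
    (hstep0 : ∀ k, Y k = 0 → Y (k + 1) = J (c k))
    (hstep1 : ∀ k, Y k ≠ 0 → Y (k + 1) = Y k + e (c k) (a k))
    (hinf : {k | Y k = 0}.Infinite) (i : ℕ) :
    ∀ m, Nat.nth (fun k => Y k = 0) i + 1 + m ≤ Nat.nth (fun k => Y k = 0) (i + 1) →
      Y (Nat.nth (fun k => Y k = 0) i + 1 + m)
          = J (i + 1) + ∑ j ∈ Finset.range m, e (i + 1) j ∧
        a (Nat.nth (fun k => Y k = 0) i + 1 + m) = m := by
  have hinf' : (setOf (fun k => Y k = 0)).Infinite := hinf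
  set t := Nat.nth (fun k => Y k = 0) i with ht
  have hYt : Y t = 0 := Nat.nth_mem_of_infinite hinf' i
  intro m
  induction m with
  | zero =>
    intro _
    have hct : c t = i + 1 := by
      rw [hc, count_between hinf' le_rfl (by
        exact (Nat.nth_lt_nth hinf').mpr (Nat.lt_succ_self i))]
    constructor
    · simpa [hct] using hstep0 t hYt
    · simpa [hYt] using ha t
  | succ m ih =>
    intro hm
    have hm' : t + 1 + m ≤ Nat.nth (fun k => Y k = 0) (i + 1) := by omega
    obtain ⟨ihY, iha⟩ := ih hm'
    set k := t + 1 + m with hk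
    have hk1 : t + 1 + (m + 1) = k + 1 := by omega
    have hkin1 : t < k := by omega
    have hkin2 : k < Nat.nth (fun k => Y k = 0) (i + 1) := by omega
    have hYk : Y k ≠ 0 := not_p_between hinf' hkin1 hkin2
    have hck : c k = i + 1 := by
      rw [hc, count_between hinf' (by omega) hkin2]
    constructor
    · rw [hk1, hstep1 k hYk, ihY, hck, iha, Finset.sum_range_succ]
      ring
    · rw [hk1, ha k, if_neg hYk, iha]


/-- Comparison of return times and visit counts at zero: if `X̃` jumps from zero by
`ξᵢ` (with `|ξᵢ| ≥ 1`) and `S̃` jumps from zero by `sign(ξᵢ)`, while between zeros both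
follow the same (time-shifted) ±1 increments, then `S̃` returns to zero at least as fast
as `X̃`, and hence visits zero at least as often. -/
theorem visits_comparison
    (e : ℕ → ℕ → ℤ) (he : ∀ i j, (e i j).natAbs = 1)
    (ξ : ℕ → ℤ) (hξ : ∀ i, 1 ≤ (ξ i).natAbs)
    (Xt St : ℕ → ℤ) (aX aS : ℕ → ℕ) (cX cS : ℕ → ℕ)
    (hcX : ∀ k, cX k = ((Finset.range (k + 1)).filter fun j => Xt j = 0).card)
    (hcS : ∀ k, cS k = ((Finset.range (k + 1)).filter fun j => St j = 0).card)
    (hX0 : Xt 0 = 0) (hS0 : St 0 = 0)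
    (haX0 : aX 0 = 0) (haX : ∀ k, aX (k + 1) = if Xt k = 0 then 0 else aX k + 1)
    (haS0 : aS 0 = 0) (haS : ∀ k, aS (k + 1) = if St k = 0 then 0 else aS k + 1)
    (hXstep0 : ∀ k, Xt k = 0 → Xt (k + 1) = ξ (cX k))
    (hXstep1 : ∀ k, Xt k ≠ 0 → Xt (k + 1) = Xt k + e (cX k) (aX k))
    (hSstep0 : ∀ k, St k = 0 → St (k + 1) = Int.sign (ξ (cS k)))
    (hSstep1 : ∀ k, St k ≠ 0 → St (k + 1) = St k + e (cS k) (aS k))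
    (hXinf : {k | Xt k = 0}.Infinite) (hSinf : {k | St k = 0}.Infinite) :
    (∀ i : ℕ,
      Nat.nth (fun k => St k = 0) (i + 1) - Nat.nth (fun k => St k = 0) i ≤
      Nat.nth (fun k => Xt k = 0) (i + 1) - Nat.nth (fun k => Xt k = 0) i) ∧
    ∀ k, cX k ≤ cS k := by
  have hcX' : ∀ k, cX k = Nat.count (fun j => Xt j = 0) (k + 1) := by
    intro k; rw [hcX, Nat.count_eq_card_filter_range]
  have hcS' : ∀ k, cS k = Nat.count (fun j => St j = 0) (k + 1) := by
    intro k; rw [hcS, Nat.count_eq_card_filter_range]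
  have hXinf' : (setOf fun k => Xt k = 0).Infinite := hXinf
  have hSinf' : (setOf fun k => St k = 0).Infinite := hSinf
  have key : ∀ i, Nat.nth (fun k => St k = 0) (i + 1) ≤
      Nat.nth (fun k => St k = 0) i +
        (Nat.nth (fun k => Xt k = 0) (i + 1) - Nat.nth (fun k => Xt k = 0) i) := by
    intro i
    have hlt : Nat.nth (fun k => Xt k = 0) i < Nat.nth (fun k => Xt k = 0) (i + 1) :=
      (Nat.nth_lt_nth hXinf').mpr (Nat.lt_succ_self i)
    set tp := Nat.nth (fun k => Xt k = 0) with htp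
    set tq := Nat.nth (fun k => St k = 0) with htq
    set g := tp (i + 1) - tp i - 1 with hgdef
    have hg : tp i + 1 + g = tp (i + 1) := by omega
    obtain ⟨hFX, -⟩ := excursion e ξ Xt aX cX hcX' haX hXstep0 hXstep1 hXinf i g
      (by rw [← htp]; omega)
    rw [← htp, hg] at hFX
    have hz : Xt (tp (i + 1)) = 0 := Nat.nth_mem_of_infinite hXinf' (i + 1)
    rw [hz] at hFX
    have hstepf : ∀ m,
        ((Int.sign (ξ (i + 1)) + ∑ j ∈ Finset.range (m + 1), e (i + 1) j) -
          (Int.sign (ξ (i + 1)) + ∑ j ∈ Finset.range m, e (i + 1) j)).natAbs = 1 := by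
      intro m
      have h1 : (Int.sign (ξ (i + 1)) + ∑ j ∈ Finset.range (m + 1), e (i + 1) j) -
          (Int.sign (ξ (i + 1)) + ∑ j ∈ Finset.range m, e (i + 1) j) = e (i + 1) m := by
        rw [Finset.sum_range_succ]; ring
      rw [h1]; exact he _ _
    have hξ1 : 1 ≤ (ξ (i + 1)).natAbs := hξ (i + 1)
    have hne : ξ (i + 1) ≠ 0 := by omega
    have hex : ∃ m ≤ g, Int.sign (ξ (i + 1)) + ∑ j ∈ Finset.range m, e (i + 1) j = 0 := by
      rcases lt_or_gt_of_ne hne with hneg | hpos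
      · have hs : Int.sign (ξ (i + 1)) = -1 := Int.sign_eq_neg_one_iff_neg.mpr hneg
        obtain ⟨m, hm, hfm⟩ := ivt_neg
          (fun m => Int.sign (ξ (i + 1)) + ∑ j ∈ Finset.range m, e (i + 1) j) hstepf g
          (show Int.sign (ξ (i + 1)) + ∑ j ∈ Finset.range 0, e (i + 1) j < 0 by
            simp [hs])
          (show (0:ℤ) ≤ Int.sign (ξ (i + 1)) + ∑ j ∈ Finset.range g, e (i + 1) j by
            rw [hs]; omega)
        exact ⟨m, hm, hfm⟩
      · have hs : Int.sign (ξ (i + 1)) = 1 := Int.sign_eq_one_iff_pos.mpr hpos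
        obtain ⟨m, hm, hfm⟩ := ivt_pos
          (fun m => Int.sign (ξ (i + 1)) + ∑ j ∈ Finset.range m, e (i + 1) j) hstepf g
          (show (0:ℤ) < Int.sign (ξ (i + 1)) + ∑ j ∈ Finset.range 0, e (i + 1) j by
            simp [hs])
          (show Int.sign (ξ (i + 1)) + ∑ j ∈ Finset.range g, e (i + 1) j ≤ 0 by
            rw [hs]; omega)
        exact ⟨m, hm, hfm⟩
    obtain ⟨m, hmg, hfm⟩ := hex
    have hq1 : tq (i + 1) ≤ tq i + 1 + m := by
      by_cases hle : tq i + 1 + m ≤ tq (i + 1)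
      · obtain ⟨hFS, -⟩ := excursion e (fun n => Int.sign (ξ n)) St aS cS hcS' haS
          hSstep0 hSstep1 hSinf i m (by rw [← htq]; exact hle)
        rw [← htq] at hFS
        have hz' : St (tq i + 1 + m) = 0 := by rw [hFS]; exact hfm
        have htlt : tq i < tq i + 1 + m := by omega
        exact nth_succ_le_of_p hSinf' hz' htlt
      · omega
    omega
  constructor
  · intro i
    have h1 := key i
    omega
  · have hmono : ∀ i, Nat.nth (fun k => St k = 0) i ≤ Nat.nth (fun k => Xt k = 0) i := by
      intro i
      induction i with
      | zero => rw [Nat.nth_zero_of_zero hS0, Nat.nth_zero_of_zero hX0]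
      | succ i ih =>
        have h1 := key i
        have h2 : Nat.nth (fun k => Xt k = 0) i < Nat.nth (fun k => Xt k = 0) (i + 1) :=
          (Nat.nth_lt_nth hXinf').mpr (Nat.lt_succ_self i)
        omega
    intro k
    rw [hcX' k, hcS' k]
    rcases Nat.eq_zero_or_pos (Nat.count (fun j => Xt j = 0) (k + 1)) with h | h
    · omega
    · set c := Nat.count (fun j => Xt j = 0) (k + 1) with hcdef
      have h1 : Nat.nth (fun j => Xt j = 0) (c - 1) < k + 1 :=
        Nat.nth_lt_of_lt_count (by omega)
      have h2 : Nat.nth (fun j => St j = 0) (c - 1) < k + 1 :=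
        lt_of_le_of_lt (hmono _) h1
      have h3 : c - 1 < Nat.count (fun j => St j = 0) (k + 1) :=
        (Nat.lt_nth_iff_count_lt hSinf').mpr h2
      omega
end
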